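/- arXiv:1508.04106 — 4 statements merged into one kernel-verified Lean document; each statement's English description precedes it below -/
import Mathlib

section
/- Let D ⊆ ℝ² be a bounded open set, let x₀ ∈ D, let u₊, u₋ > 0, let r : ℝ → ℝ be continuous and 2π-periodic, and let (r_k)_{k≥1} be a sequence of continuous 2π-periodic functions on ℝ with ‖r_k − r‖_∞ → 0 as k → ∞. Then F₂(r_k, x₀) converges to F₂(r, x₀) in Lebesgue measure on D, i.e. for every δ > 0 the Lebesgue measure of {x ∈ D : |F₂(r_k, x₀)(x) − F₂(r, x₀)(x)| > δ} tends to 0 as k → ∞. -/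
/-! Where `F₂(r_k, x₀)` and `F₂(r, x₀)` differ, `‖x - x₀‖` lies between `r_k θ` and `r θ`, so the
bad set lies in `{x ∈ B : |‖x - x₀‖ - r θ| ≤ ‖r_k - r‖_∞}` for a ball `B ⊇ D`. As the width
tends to `0` these sets shrink to the curve `‖x - x₀‖ = r θ`, which is null: in polar
coordinates it is the graph of `r`. -/

open MeasureTheory Filter

/-- The angular polar coordinate of a point in the plane (the argument of the
corresponding complex number, taking values in `(-π, π]`). -/
noncomputable def polarAngle (x : EuclideanSpace ℝ (Fin 2)) : ℝ :=
  Complex.arg ⟨x 0, x 1⟩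

/-- The star-shaped inclusion `A(r, x₀) = {x ∈ D : |x − x₀| ≤ r(h(x − x₀))}`. -/
def starSet (D : Set (EuclideanSpace ℝ (Fin 2))) (r : ℝ → ℝ)
    (x₀ : EuclideanSpace ℝ (Fin 2)) : Set (EuclideanSpace ℝ (Fin 2)) :=
  {x | x ∈ D ∧ ‖x - x₀‖ ≤ r (polarAngle (x - x₀))}

/-- The star-shaped conductivity `F₂(r, x₀) = (u₊ − u₋)·𝟙_{A(r,x₀)} + u₋`. -/
noncomputable def starF (D : Set (EuclideanSpace ℝ (Fin 2))) (uplus uminus : ℝ)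
    (r : ℝ → ℝ) (x₀ : EuclideanSpace ℝ (Fin 2)) (x : EuclideanSpace ℝ (Fin 2)) : ℝ :=
  (uplus - uminus) * (starSet D r x₀).indicator (fun _ => (1 : ℝ)) x + uminus

open Set Topology

theorem MeasureTheory.Measure.prod_setOf_fst_eq_eq_zero {α β : Type*} [MeasurableSpace α]
    [MeasurableEq α] [MeasurableSpace β] (μ : Measure α) [NullSingletonClass μ] [SFinite μ]
    (ν : Measure β) [SFinite ν] {f : β → α} (hf : Measurable f) :
    μ.prod ν {p | p.1 = f p.2} = 0 := by
  have hgraph : MeasurableSet {p : α × β | p.1 = f p.2} :=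
    measurableSet_eq_fun measurable_fst (hf.comp measurable_snd)
  rw [Measure.prod_apply_symm hgraph]
  simp

theorem tendsto_measure_inter_abs_le_nhdsGT_zero {α : Type*} [MeasurableSpace α]
    {μ : Measure α} {s : Set α} {g : α → ℝ} (hs : MeasurableSet s) (hμs : μ s ≠ ⊤)
    (hg : Measurable g) (hg₀ : μ {x | g x = 0} = 0) :
    Tendsto (fun ε => μ (s ∩ {x | |g x| ≤ ε})) (𝓝[>] 0) (𝓝 0) := by
  have hlim := tendsto_measure_biInter_gt (μ := μ) (s := fun ε => s ∩ {x | |g x| ≤ ε})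
    (fun _ _ => (hs.inter (measurableSet_le hg.abs measurable_const)).nullMeasurableSet)
    (fun _ _ _ hij => inter_subset_inter_right _ fun _ hx => le_trans hx hij)
    ⟨1, one_pos, measure_ne_top_of_subset inter_subset_left hμs⟩
  have hzero : ⋂ ε > (0 : ℝ), s ∩ {x | |g x| ≤ ε} ⊆ {x | g x = 0} := by
    intro x hx
    simp only [mem_iInter] at hx
    exact abs_nonpos_iff.1 (le_of_forall_gt_imp_ge_of_dense fun ε hε => (hx ε hε).2)
  rwa [measure_mono_null hzero hg₀] at hlim

theorem abs_sub_le_of_not_le_iff_le {a b c : ℝ} (h : ¬(a ≤ b ↔ a ≤ c)) : |a - c| ≤ |b - c| := by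
  grind

theorem Complex.volume_setOf_norm_arg_mem_eq_zero {s : Set (ℝ × ℝ)} (hs : MeasurableSet s)
    (h₀ : volume s = 0) : volume {z : ℂ | (‖z‖, z.arg) ∈ s} = 0 := by
  have hmeas : MeasurableSet {z : ℂ | (‖z‖, z.arg) ∈ s} :=
    (measurable_norm.prodMk Complex.measurable_arg) hs
  rw [← lintegral_indicator_one hmeas, ← Complex.lintegral_comp_polarCoord_symm]
  refine (lintegral_congr_ae ?_).trans lintegral_zero
  filter_upwards [ae_restrict_mem Complex.polarCoord.open_target.measurableSet,
    ae_restrict_of_ae (measure_eq_zero_iff_ae_notMem.1 h₀)] with p hp hps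
  have hpolar : (‖Complex.polarCoord.symm p‖, (Complex.polarCoord.symm p).arg) = p := by
    rw [← Complex.polarCoord_apply, Complex.polarCoord.right_inv hp]
  have hnot : Complex.polarCoord.symm p ∉ {z : ℂ | (‖z‖, z.arg) ∈ s} :=
    fun h => hps (hpolar ▸ h)
  rw [indicator_of_notMem hnot, smul_zero]

theorem polarAngle_eq_arg (x : EuclideanSpace ℝ (Fin 2)) :
    polarAngle x = (Complex.orthonormalBasisOneI.repr.symm x).arg := by
  rw [Complex.orthonormalBasisOneI_repr_symm_apply, polarAngle, Complex.mk_eq_add_mul_I]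

theorem measurable_polarAngle : Measurable polarAngle := by
  simp_rw [funext polarAngle_eq_arg]
  exact Complex.measurable_arg.comp
    Complex.orthonormalBasisOneI.repr.symm.continuous.measurable

theorem volume_setOf_norm_sub_eq_polarAngle_eq_zero (r : ℝ → ℝ) (hr : Measurable r)
    (x₀ : EuclideanSpace ℝ (Fin 2)) :
    volume {x | ‖x - x₀‖ = r (polarAngle (x - x₀))} = 0 := by
  set e := Complex.orthonormalBasisOneI.repr.symm
  have hcurve : {x | ‖x - x₀‖ = r (polarAngle (x - x₀))} =
      (fun x => e (x - x₀)) ⁻¹' {z : ℂ | (‖z‖, z.arg) ∈ {p : ℝ × ℝ | p.1 = r p.2}} := by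
    ext x
    simp only [mem_ofPred_eq, mem_preimage, e, LinearIsometryEquiv.norm_map, polarAngle_eq_arg]
  have hgraph : MeasurableSet {p : ℝ × ℝ | p.1 = r p.2} :=
    measurableSet_eq_fun measurable_fst (hr.comp measurable_snd)
  have hmp : MeasurePreserving (fun x => e (x - x₀)) :=
    e.measurePreserving.comp (measurePreserving_sub_right volume x₀)
  have hpolarGraph : MeasurableSet {z : ℂ | (‖z‖, z.arg) ∈ {p : ℝ × ℝ | p.1 = r p.2}} :=
    (measurable_norm.prodMk Complex.measurable_arg) hgraph
  rw [hcurve, hmp.measure_preimage hpolarGraph.nullMeasurableSet]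
  exact Complex.volume_setOf_norm_arg_mem_eq_zero hgraph
    (Measure.prod_setOf_fst_eq_eq_zero volume volume hr)

theorem starF_eq_of_mem_starSet_iff {D : Set (EuclideanSpace ℝ (Fin 2))} {uplus uminus : ℝ}
    {r₁ r₂ : ℝ → ℝ} {x₀ x : EuclideanSpace ℝ (Fin 2)}
    (h : x ∈ starSet D r₁ x₀ ↔ x ∈ starSet D r₂ x₀) :
    starF D uplus uminus r₁ x₀ x = starF D uplus uminus r₂ x₀ x := by
  by_cases h₁ : x ∈ starSet D r₁ x₀
  · simp [starF, h₁, h.1 h₁]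
  · simp [starF, h₁, mt h.2 h₁]

theorem abs_norm_sub_le_of_starF_ne {D : Set (EuclideanSpace ℝ (Fin 2))} {uplus uminus : ℝ}
    {r₁ r₂ : ℝ → ℝ} {x₀ x : EuclideanSpace ℝ (Fin 2)}
    (h : starF D uplus uminus r₁ x₀ x ≠ starF D uplus uminus r₂ x₀ x) :
    |‖x - x₀‖ - r₂ (polarAngle (x - x₀))| ≤
      |r₁ (polarAngle (x - x₀)) - r₂ (polarAngle (x - x₀))| :=
  abs_sub_le_of_not_le_iff_le fun hiff => h (starF_eq_of_mem_starSet_iff (and_congr_right' hiff))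

theorem stmt0_general (D : Set (EuclideanSpace ℝ (Fin 2)))
    (hDbdd : Bornology.IsBounded D)
    (x₀ : EuclideanSpace ℝ (Fin 2))
    (uplus uminus : ℝ)
    (r : ℝ → ℝ) (hr : Continuous r)
    (rk : ℕ → ℝ → ℝ)
    (hconv : TendstoUniformly rk r atTop) :
    ∀ δ > (0 : ℝ),
      Tendsto
        (fun k => volume {x | x ∈ D ∧
          δ < |starF D uplus uminus (rk k) x₀ x - starF D uplus uminus r x₀ x|})
        atTop (nhds 0) := by
  intro δ hδ
  set g := fun x => ‖x - x₀‖ - r (polarAngle (x - x₀))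
  have hg : Measurable g := (measurable_id.sub_const x₀).norm.sub
    (hr.measurable.comp (measurable_polarAngle.comp (measurable_id.sub_const x₀)))
  have hg₀ : volume {x | g x = 0} = 0 := by
    simpa only [g, sub_eq_zero] using
      volume_setOf_norm_sub_eq_polarAngle_eq_zero r hr.measurable x₀
  obtain ⟨R, hR⟩ := hDbdd.subset_closedBall x₀
  have hlim := tendsto_measure_inter_abs_le_nhdsGT_zero (s := Metric.closedBall x₀ R)
    measurableSet_closedBall measure_closedBall_lt_top.ne hg hg₀
  rw [ENNReal.tendsto_nhds_zero]
  intro η hη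
  obtain ⟨ε, hεη, hε⟩ :=
    ((hlim.eventually (eventually_le_nhds hη)).and self_mem_nhdsWithin).exists
  filter_upwards [Metric.tendstoUniformly_iff.1 hconv ε hε] with k hk
  refine le_trans (measure_mono ?_) hεη
  rintro x ⟨hxD, hxδ⟩
  refine ⟨hR hxD, ?_⟩
  calc |g x| ≤ |rk k (polarAngle (x - x₀)) - r (polarAngle (x - x₀))| :=
        abs_norm_sub_le_of_starF_ne (sub_ne_zero.1 (abs_pos.1 (hδ.trans hxδ)))
    _ ≤ ε := by rw [abs_sub_comm]; exact (hk _).le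

theorem stmt0 (D : Set (EuclideanSpace ℝ (Fin 2))) (hDopen : IsOpen D)
    (hDbdd : Bornology.IsBounded D)
    (x₀ : EuclideanSpace ℝ (Fin 2)) (hx₀ : x₀ ∈ D)
    (uplus uminus : ℝ) (huplus : 0 < uplus) (huminus : 0 < uminus)
    (r : ℝ → ℝ) (hr : Continuous r) (hrper : Function.Periodic r (2 * Real.pi))
    (rk : ℕ → ℝ → ℝ) (hrk : ∀ k, Continuous (rk k))
    (hrkper : ∀ k, Function.Periodic (rk k) (2 * Real.pi))
    (hconv : TendstoUniformly rk r atTop) :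
    ∀ δ > (0 : ℝ),
      Tendsto
        (fun k => volume {x | x ∈ D ∧
          δ < |starF D uplus uminus (rk k) x₀ x - starF D uplus uminus r x₀ x|})
        atTop (nhds 0) :=
  stmt0_general D hDbdd x₀ uplus uminus r hr rk hconv
end

section
/- Let D ⊆ ℝ^d be a bounded open set. Let u : cl(D) → ℝ be continuous and suppose that for each i = 1, …, n−1 the level set {x ∈ D : u(x) = c_i} has Lebesgue measure zero. Let (u_k)_{k≥1} be a sequence of continuous functions on cl(D) with ‖u_k − u‖_∞ → 0 as k → ∞. Then F₃(u_k) converges to F₃(u) in Lebesgue measure on D, i.e. for every δ > 0 the Lebesgue measure of {x ∈ D : |F₃(u_k)(x) − F₃(u)(x)| > δ} tends to 0 as k → ∞. -/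
/-! The values `F₃(u_k)(x)` and `F₃(u)(x)` can only differ if some threshold `c_i` lies between
`u_k(x)` and `u(x)`, hence within `‖u_k - u‖_∞` of `u(x)`. So the set where they differ is covered
by the tubes `{x ∈ D : |u(x) - c_i| ≤ ε}`, which decrease as `ε ↓ 0` to the null level sets
`{u = c_i}`; since `D` has finite measure, continuity from above makes their measure tend to `0`. -/

open MeasureTheory Filter

/-- The region `D_i(u) = {x ∈ D : c_{i-1} ≤ u(x) < c_i}`, where the thresholds are
extended reals with `c 0 = -∞` and `c n = ∞`. -/
def levelRegion {d : ℕ} (D : Set (EuclideanSpace ℝ (Fin d))) {n : ℕ}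
    (c : Fin (n + 1) → EReal) (u : EuclideanSpace ℝ (Fin d) → ℝ) (i : Fin n) :
    Set (EuclideanSpace ℝ (Fin d)) :=
  {x | x ∈ D ∧ c i.castSucc ≤ (u x : EReal) ∧ (u x : EReal) < c i.succ}

/-- The level set conductivity map `F₃(u) = ∑_{i=1}^n f_i · 𝟙_{D_i(u)}`. -/
noncomputable def levelF {d : ℕ} (D : Set (EuclideanSpace ℝ (Fin d))) {n : ℕ}
    (c : Fin (n + 1) → EReal) (f : Fin n → EuclideanSpace ℝ (Fin d) → ℝ)
    (u : EuclideanSpace ℝ (Fin d) → ℝ) (x : EuclideanSpace ℝ (Fin d)) : ℝ :=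
  ∑ i : Fin n, (levelRegion D c u i).indicator (f i) x

open Set Topology

theorem tendsto_measure_abs_sub_le_nhdsGT {α : Type*} [TopologicalSpace α] [MeasurableSpace α]
    [OpensMeasurableSpace α] {μ : Measure α} {s : Set α} (hs : μ s ≠ ⊤) {u : α → ℝ}
    (hu : ContinuousOn u (closure s)) {t : ℝ} (ht : μ {x ∈ s | u x = t} = 0) :
    Tendsto (fun ε => μ {x ∈ s | |u x - t| ≤ ε}) (𝓝[>] 0) (𝓝 0) := by
  -- `s` need not be measurable, so work with `μ.restrict s` and the closed sets `F ε`.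
  set F : ℝ → Set α := fun ε => closure s ∩ (fun x => |u x - t|) ⁻¹' Iic ε
  have hF_closed : ∀ ε, IsClosed (F ε) := fun ε =>
    (hu.sub continuousOn_const).abs.preimage_isClosed_of_isClosed isClosed_closure isClosed_Iic
  have hF : ∀ ε, μ {x ∈ s | |u x - t| ≤ ε} = μ.restrict s (F ε) := fun ε => by
    rw [Measure.restrict_apply (hF_closed ε).measurableSet]
    congr 1
    ext x
    exact ⟨fun ⟨hxs, hle⟩ => ⟨⟨subset_closure hxs, hle⟩, hxs⟩, fun ⟨⟨_, hle⟩, hxs⟩ => ⟨hxs, hle⟩⟩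
  have hInter : μ.restrict s (⋂ ε > 0, F ε) = 0 := by
    have hclosed : IsClosed (⋂ ε > 0, F ε) := isClosed_biInter fun ε _ => hF_closed ε
    rw [Measure.restrict_apply hclosed.measurableSet]
    refine measure_mono_null (fun x ⟨hxF, hxs⟩ => ?_) ht
    refine ⟨hxs, ?_⟩
    simp only [F, mem_iInter, mem_inter_iff, mem_preimage, mem_Iic] at hxF
    exact sub_eq_zero.1 (abs_nonpos_iff.1 (le_of_forall_pos_le_add fun ε hε => by
      simpa using (hxF ε hε).2))
  simp only [hF]
  rw [← hInter]
  refine tendsto_measure_biInter_gt (fun ε _ => (hF_closed ε).measurableSet.nullMeasurableSet)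
    (fun i j _ hij => inter_subset_inter_right _ (preimage_mono (Iic_subset_Iic.2 hij)))
    ⟨1, one_pos, ?_⟩
  exact ((measure_mono (subset_univ _)).trans_lt
    (by rwa [Measure.restrict_apply_univ, lt_top_iff_ne_top])).ne

theorem abs_sub_le_of_not_le_iff {a b r : ℝ} (h : ¬(r ≤ b ↔ r ≤ a)) : |a - r| ≤ |b - a| := by
  rcases le_or_gt r a with hra | hra
  · have hrb : b < r := not_le.1 fun hrb => h (iff_of_true hrb hra)
    rw [abs_of_nonneg (by linarith), abs_of_neg (by linarith)]
    linarith
  · have hrb : r ≤ b := not_lt.1 fun hrb => h (iff_of_false hrb.not_ge hra.not_ge)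
    rw [abs_of_neg (by linarith), abs_of_nonneg (by linarith)]
    linarith

theorem tendsto_measure_setOf_not_le_iff {α ι : Type*} [TopologicalSpace α] [MeasurableSpace α]
    [OpensMeasurableSpace α] {μ : Measure α} {s : Set α} (hs : μ s ≠ ⊤) {l : Filter ι}
    {u : α → ℝ} {v : ι → α → ℝ} (hu : ContinuousOn u (closure s))
    (hv : TendstoUniformlyOn v u l s) {t : EReal} (ht : μ {x ∈ s | (u x : EReal) = t} = 0) :
    Tendsto (fun k => μ {x ∈ s | ¬(t ≤ (v k x : EReal) ↔ t ≤ (u x : EReal))}) l (𝓝 0) := by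
  induction t using EReal.rec with
  | bot => simpa using tendsto_const_nhds
  | top => simpa using tendsto_const_nhds
  | coe r =>
    simp only [EReal.coe_le_coe_iff]
    simp only [EReal.coe_eq_coe_iff] at ht
    refine ENNReal.tendsto_nhds_zero.2 fun η hη => ?_
    obtain ⟨ε, hε_small, hε_pos⟩ :=
      ((ENNReal.tendsto_nhds_zero.1 (tendsto_measure_abs_sub_le_nhdsGT hs hu ht) η hη).and
        self_mem_nhdsWithin).exists
    filter_upwards [Metric.tendstoUniformlyOn_iff.1 hv ε hε_pos] with k hk
    refine (measure_mono fun x hx => ?_).trans hε_small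
    refine ⟨hx.1, ?_⟩
    calc |u x - r| ≤ |v k x - u x| := abs_sub_le_of_not_le_iff hx.2
      _ ≤ ε := by simpa [abs_sub_comm, Real.dist_eq] using (hk x hx.1).le

theorem levelF_eq_of_forall_le_iff {d : ℕ} (D : Set (EuclideanSpace ℝ (Fin d))) {n : ℕ}
    (c : Fin (n + 1) → EReal) (f : Fin n → EuclideanSpace ℝ (Fin d) → ℝ)
    {u v : EuclideanSpace ℝ (Fin d) → ℝ} {x : EuclideanSpace ℝ (Fin d)}
    (h : ∀ j, (c j ≤ (v x : EReal) ↔ c j ≤ (u x : EReal))) :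
    levelF D c f v x = levelF D c f u x := by
  have hmem : ∀ i, x ∈ levelRegion D c v i ↔ x ∈ levelRegion D c u i := fun i => by
    simp only [levelRegion, mem_ofPred_eq, ← not_le, h]
  unfold levelF
  classical
  exact Finset.sum_congr rfl fun i _ => by simp only [indicator_apply, hmem]

theorem stmt7_general {d : ℕ} (D : Set (EuclideanSpace ℝ (Fin d)))
    (hDbdd : Bornology.IsBounded D)
    (n : ℕ) (c : Fin (n + 1) → EReal)
    (hc0 : c 0 = ⊥) (hcn : c (Fin.last n) = ⊤)
    (f : Fin n → EuclideanSpace ℝ (Fin d) → ℝ)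
    (u : EuclideanSpace ℝ (Fin d) → ℝ) (hu : ContinuousOn u (closure D))
    (hlevel : ∀ i : Fin (n + 1), i ≠ 0 → i ≠ Fin.last n →
      volume {x | x ∈ D ∧ (u x : EReal) = c i} = 0)
    (uk : ℕ → EuclideanSpace ℝ (Fin d) → ℝ)
    (hconv : TendstoUniformlyOn uk u atTop (closure D)) :
    ∀ δ > (0 : ℝ),
      Tendsto (fun k => volume {x | x ∈ D ∧ δ < |levelF D c f (uk k) x - levelF D c f u x|})
        atTop (nhds 0) := by
  intro δ hδ
  have hnull : ∀ j, volume {x ∈ D | (u x : EReal) = c j} = 0 := fun j => by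
    by_cases hj0 : j = 0
    · simp [hj0, hc0]
    by_cases hjn : j = Fin.last n
    · simp [hjn, hcn]
    exact hlevel j hj0 hjn
  have hcross := tendsto_finsetSum Finset.univ fun j _ =>
    tendsto_measure_setOf_not_le_iff hDbdd.measure_lt_top.ne hu (hconv.mono subset_closure)
      (hnull j)
  rw [Finset.sum_const_zero] at hcross
  refine tendsto_of_tendsto_of_tendsto_of_le_of_le tendsto_const_nhds hcross (fun _ => bot_le)
    fun k => (measure_mono fun x hx => ?_).trans (measure_iUnion_fintype_le _ _)
  obtain ⟨hxD, hx⟩ := hx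
  by_contra hx_good
  simp only [mem_iUnion, mem_ofPred_eq, not_exists, not_and, not_not] at hx_good
  rw [levelF_eq_of_forall_le_iff D c f (hx_good · hxD), sub_self, abs_zero] at hx
  linarith

theorem stmt7 {d : ℕ} (D : Set (EuclideanSpace ℝ (Fin d))) (hDopen : IsOpen D)
    (hDbdd : Bornology.IsBounded D)
    (n : ℕ) (hn : 1 ≤ n) (c : Fin (n + 1) → EReal)
    (hc0 : c 0 = ⊥) (hcn : c (Fin.last n) = ⊤) (hcmono : StrictMono c)
    (f : Fin n → EuclideanSpace ℝ (Fin d) → ℝ)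
    (hfcont : ∀ i, ContinuousOn (f i) (closure D))
    (hfpos : ∀ i, ∀ x ∈ closure D, 0 < f i x)
    (u : EuclideanSpace ℝ (Fin d) → ℝ) (hu : ContinuousOn u (closure D))
    (hlevel : ∀ i : Fin (n + 1), i ≠ 0 → i ≠ Fin.last n →
      volume {x | x ∈ D ∧ (u x : EReal) = c i} = 0)
    (uk : ℕ → EuclideanSpace ℝ (Fin d) → ℝ)
    (huk : ∀ k, ContinuousOn (uk k) (closure D))
    (hconv : TendstoUniformlyOn uk u atTop (closure D)) :
    ∀ δ > (0 : ℝ),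
      Tendsto (fun k => volume {x | x ∈ D ∧ δ < |levelF D c f (uk k) x - levelF D c f u x|})
        atTop (nhds 0) :=
  stmt7_general D hDbdd n c hc0 hcn f u hu hlevel uk hconv
end

section
/- Let D ⊆ ℝ^d be a bounded open set. Let u : cl(D) → ℝ be continuous and suppose that for each i = 1, …, n−1 the level set {x ∈ D : u(x) = c_i} has Lebesgue measure zero. Let (u_k)_{k≥1} be a sequence of continuous functions on cl(D) with ‖u_k − u‖_∞ → 0 as k → ∞. Then for every p with 1 ≤ p < ∞, the integral ∫_D |F₃(u_k)(x) − F₃(u)(x)|^p dx tends to 0 as k → ∞; that is, F₃(u_k) → F₃(u) in L^p(D). -/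
/-!
`F₃(u)(x)` depends only on which interval `[c_{i-1}, c_i)` contains `u x`. Off the null level
sets `{u = c_i}`, the value `u x` lies in the interior of its interval, so `u_k x → u x` forces
`F₃(u_k)(x) = F₃(u)(x)` for all large `k`. All `F₃(v)` are bounded by `∑ |f_i|`, which is
bounded on the compact set `cl(D)`, and `D` has finite measure, so dominated convergence
applies.
-/

open MeasureTheory Filter

open Set Topology

theorem frontier_Ico_subset {α : Type*} [TopologicalSpace α] [LinearOrder α]
    [OrderClosedTopology α] (a b : α) : frontier (Ico a b) ⊆ {a, b} := by
  change frontier ({x | a ≤ x} ∩ {x | x < b}) ⊆ _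
  refine (frontier_inter_subset _ _).trans (union_subset ?_ ?_)
  · exact inter_subset_left.trans <| (frontier_le_subset_eq continuous_const continuous_id).trans
      fun x hx => Or.inl hx.symm
  · exact inter_subset_right.trans <| (frontier_lt_subset_eq continuous_id continuous_const).trans
      fun x hx => Or.inr hx

theorem eventually_mem_iff_of_notMem_frontier {X : Type*} [TopologicalSpace X] {s : Set X}
    {x : X} (hx : x ∉ frontier s) : ∀ᶠ y in 𝓝 x, (y ∈ s ↔ x ∈ s) := by
  rw [← mem_compl_iff, compl_frontier_eq_union_interior] at hx
  rcases hx with hin | hout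
  · filter_upwards [mem_interior_iff_mem_nhds.mp hin] with y hy
    exact iff_of_true hy (interior_subset hin)
  · filter_upwards [mem_interior_iff_mem_nhds.mp hout] with y hy
    exact iff_of_false hy (interior_subset hout)

theorem tendsto_integral_abs_rpow_of_tendsto_zero {α : Type*} [MeasurableSpace α]
    {μ : Measure α} [IsFiniteMeasure μ] {H : ℕ → α → ℝ} {C p : ℝ} (hp : 0 < p)
    (hmeas : ∀ k, AEStronglyMeasurable (H k) μ) (hbound : ∀ k, ∀ᵐ x ∂μ, |H k x| ≤ C)
    (hlim : ∀ᵐ x ∂μ, Tendsto (fun k => H k x) atTop (𝓝 0)) :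
    Tendsto (fun k => ∫ x, |H k x| ^ p ∂μ) atTop (𝓝 0) := by
  have hcont : Continuous fun y : ℝ => |y| ^ p :=
    (Real.continuous_rpow_const hp.le).comp continuous_abs
  have hpow_bound : ∀ k, ∀ᵐ x ∂μ, ‖|H k x| ^ p‖ ≤ C ^ p := by
    intro k
    filter_upwards [hbound k] with x hx
    rw [Real.norm_of_nonneg (by positivity)]
    exact Real.rpow_le_rpow (abs_nonneg _) hx hp.le
  have hpow_zero : Tendsto (fun y : ℝ => |y| ^ p) (𝓝 0) (𝓝 0) := by
    simpa [Real.zero_rpow hp.ne'] using hcont.tendsto 0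
  have hpow_lim : ∀ᵐ x ∂μ, Tendsto (fun k => |H k x| ^ p) atTop (𝓝 0) := by
    filter_upwards [hlim] with x hx using hpow_zero.comp hx
  simpa using tendsto_integral_of_dominated_convergence (fun _ => C ^ p)
    (fun k => hcont.comp_aestronglyMeasurable (hmeas k)) (integrable_const _) hpow_bound
    hpow_lim

section levelF

variable {d : ℕ} {D : Set (EuclideanSpace ℝ (Fin d))} {n : ℕ} {c : Fin (n + 1) → EReal}

theorem measurableSet_levelRegion (hD : IsOpen D) {v : EuclideanSpace ℝ (Fin d) → ℝ}
    (hv : ContinuousOn v D) (i : Fin n) : MeasurableSet (levelRegion D c v i) := by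
  set w : EuclideanSpace ℝ (Fin d) → EReal := fun x => (v x : EReal)
  have hw : ContinuousOn w D := continuous_coe_real_ereal.comp_continuousOn hv
  have hregion : levelRegion D c v i =
      (D ∩ w ⁻¹' Iio (c i.succ)) \ (D ∩ w ⁻¹' Iio (c i.castSucc)) := by
    ext x
    simp only [levelRegion, w, mem_ofPred_eq, Set.mem_sdiff, mem_inter_iff, mem_preimage,
      mem_Iio, not_and, not_lt]
    tauto
  rw [hregion]
  exact (hw.isOpen_inter_preimage hD isOpen_Iio).measurableSet.diff
    (hw.isOpen_inter_preimage hD isOpen_Iio).measurableSet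

theorem aemeasurable_levelF (hD : IsOpen D) {f : Fin n → EuclideanSpace ℝ (Fin d) → ℝ}
    (hf : ∀ i, ContinuousOn (f i) D) {v : EuclideanSpace ℝ (Fin d) → ℝ}
    (hv : ContinuousOn v D) :
    AEMeasurable (levelF D c f v) (volume.restrict D) :=
  Finset.aemeasurable_fun_sum _ fun i _ =>
    ((hf i).aemeasurable hD.measurableSet).indicator (measurableSet_levelRegion hD hv i)

theorem abs_levelF_le (f : Fin n → EuclideanSpace ℝ (Fin d) → ℝ)
    (v : EuclideanSpace ℝ (Fin d) → ℝ) (x : EuclideanSpace ℝ (Fin d)) :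
    |levelF D c f v x| ≤ ∑ i, |f i x| :=
  (Finset.abs_sum_le_sum_abs _ _).trans <| Finset.sum_le_sum fun i _ => by
    simpa only [Real.norm_eq_abs] using norm_indicator_le_norm_self (f i) x

theorem levelF_eventually_eq_of_tendsto {ι : Type*} {l : Filter ι}
    (f : Fin n → EuclideanSpace ℝ (Fin d) → ℝ)
    {v : ι → EuclideanSpace ℝ (Fin d) → ℝ} {u : EuclideanSpace ℝ (Fin d) → ℝ}
    {x : EuclideanSpace ℝ (Fin d)}
    (hx : ∀ j, (u x : EReal) ≠ c j) (hv : Tendsto (fun k => v k x) l (𝓝 (u x))) :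
    ∀ᶠ k in l, levelF D c f (v k) x = levelF D c f u x := by
  have hv' : Tendsto (fun k => (v k x : EReal)) l (𝓝 (u x : EReal)) :=
    (continuous_coe_real_ereal.tendsto _).comp hv
  have hregion :
      ∀ i, ∀ᶠ k in l, (x ∈ levelRegion D c (v k) i ↔ x ∈ levelRegion D c u i) := by
    intro i
    have hfront : (u x : EReal) ∉ frontier (Ico (c i.castSucc) (c i.succ)) := fun h => by
      rcases frontier_Ico_subset _ _ h with h | h <;> exact hx _ h
    filter_upwards [hv' (eventually_mem_iff_of_notMem_frontier hfront)] with k hk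
    exact and_congr_right' hk
  filter_upwards [eventually_all.2 hregion] with k hk
  exact Finset.sum_congr rfl fun i _ => indicator_eq_indicator (hk i) rfl

theorem ae_restrict_forall_coe_ne (hD : MeasurableSet D) (hc0 : c 0 = ⊥)
    (hcn : c (Fin.last n) = ⊤) {u : EuclideanSpace ℝ (Fin d) → ℝ}
    (hlevel : ∀ i : Fin (n + 1), i ≠ 0 → i ≠ Fin.last n →
      volume {x | x ∈ D ∧ (u x : EReal) = c i} = 0) :
    ∀ᵐ x ∂volume.restrict D, ∀ j, (u x : EReal) ≠ c j := by
  refine ae_all_iff.2 fun j => ?_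
  by_cases h0 : j = 0
  · exact .of_forall fun x => by simp [h0, hc0]
  by_cases hlast : j = Fin.last n
  · exact .of_forall fun x => by simp [hlast, hcn]
  filter_upwards [ae_restrict_mem hD,
    ae_restrict_of_ae (measure_eq_zero_iff_ae_notMem.1 (hlevel j h0 hlast))] with x hxD hx
  exact fun h => hx ⟨hxD, h⟩

end levelF

theorem stmt8_general {d : ℕ} (D : Set (EuclideanSpace ℝ (Fin d))) (hDopen : IsOpen D)
    (hDbdd : Bornology.IsBounded D)
    (n : ℕ) (c : Fin (n + 1) → EReal)
    (hc0 : c 0 = ⊥) (hcn : c (Fin.last n) = ⊤)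
    (f : Fin n → EuclideanSpace ℝ (Fin d) → ℝ)
    (hfcont : ∀ i, ContinuousOn (f i) (closure D))
    (u : EuclideanSpace ℝ (Fin d) → ℝ) (hu : ContinuousOn u (closure D))
    (hlevel : ∀ i : Fin (n + 1), i ≠ 0 → i ≠ Fin.last n →
      volume {x | x ∈ D ∧ (u x : EReal) = c i} = 0)
    (uk : ℕ → EuclideanSpace ℝ (Fin d) → ℝ)
    (huk : ∀ k, ContinuousOn (uk k) (closure D))
    (hconv : TendstoUniformlyOn uk u atTop (closure D)) :
    ∀ p : ℝ, 1 ≤ p →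
      Tendsto (fun k => ∫ x in D, |levelF D c f (uk k) x - levelF D c f u x| ^ p)
        atTop (nhds 0) := by
  intro p hp
  have hcompact : IsCompact (closure D) := hDbdd.isCompact_closure
  have : IsFiniteMeasure (volume.restrict D) := isFiniteMeasure_restrict.2
    ((measure_mono subset_closure).trans_lt hcompact.measure_lt_top).ne
  obtain ⟨C, hC⟩ := hcompact.exists_bound_of_continuousOn
    (continuousOn_finsetSum Finset.univ fun i _ => (hfcont i).abs)
  have hF : ∀ v, ContinuousOn v (closure D) →
      AEMeasurable (levelF D c f v) (volume.restrict D) := fun v hv =>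
    aemeasurable_levelF hDopen (fun i => (hfcont i).mono subset_closure)
      (hv.mono subset_closure)
  refine tendsto_integral_abs_rpow_of_tendsto_zero (C := C + C) (by linarith)
    (fun k => ((hF _ (huk k)).sub (hF _ hu)).aestronglyMeasurable) (fun k => ?_) ?_
  · filter_upwards [ae_restrict_mem hDopen.measurableSet] with x hx
    have hfx : ∑ i, |f i x| ≤ C := (le_abs_self _).trans (hC x (subset_closure hx))
    calc |levelF D c f (uk k) x - levelF D c f u x|
        ≤ |levelF D c f (uk k) x| + |levelF D c f u x| := abs_sub _ _
      _ ≤ C + C := add_le_add ((abs_levelF_le f _ x).trans hfx) ((abs_levelF_le f _ x).trans hfx)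
  · filter_upwards [ae_restrict_forall_coe_ne hDopen.measurableSet hc0 hcn hlevel,
      ae_restrict_mem hDopen.measurableSet] with x hx hxD
    refine tendsto_const_nhds.congr' ?_
    filter_upwards [levelF_eventually_eq_of_tendsto f hx (hconv.tendsto_at (subset_closure hxD))]
      with k hk
    rw [hk, sub_self]

theorem stmt8 {d : ℕ} (D : Set (EuclideanSpace ℝ (Fin d))) (hDopen : IsOpen D)
    (hDbdd : Bornology.IsBounded D)
    (n : ℕ) (hn : 1 ≤ n) (c : Fin (n + 1) → EReal)
    (hc0 : c 0 = ⊥) (hcn : c (Fin.last n) = ⊤) (hcmono : StrictMono c)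
    (f : Fin n → EuclideanSpace ℝ (Fin d) → ℝ)
    (hfcont : ∀ i, ContinuousOn (f i) (closure D))
    (hfpos : ∀ i, ∀ x ∈ closure D, 0 < f i x)
    (u : EuclideanSpace ℝ (Fin d) → ℝ) (hu : ContinuousOn u (closure D))
    (hlevel : ∀ i : Fin (n + 1), i ≠ 0 → i ≠ Fin.last n →
      volume {x | x ∈ D ∧ (u x : EReal) = c i} = 0)
    (uk : ℕ → EuclideanSpace ℝ (Fin d) → ℝ)
    (huk : ∀ k, ContinuousOn (uk k) (closure D))
    (hconv : TendstoUniformlyOn uk u atTop (closure D)) :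
    ∀ p : ℝ, 1 ≤ p →
      Tendsto (fun k => ∫ x in D, |levelF D c f (uk k) x - levelF D c f u x| ^ p)
        atTop (nhds 0) :=
  stmt8_general D hDopen hDbdd n c hc0 hcn f hfcont u hu hlevel uk huk hconv
end

section
/- Let (X, 𝓕, μ₀) be a probability space, let m ∈ ℕ, and let G : X → ℝ^m be a measurable map for which there exists M ≥ 0 with ‖G(u)‖ ≤ M for all u ∈ X, where ‖·‖ is the Euclidean norm on ℝ^m. For y ∈ ℝ^m define Φ(u; y) = (1/2)‖G(u) − y‖² and Z(y) = ∫_X exp(−Φ(u; y)) μ₀(du). Then Z(y) > 0 for every y ∈ ℝ^m, and for every ρ > 0 there exists a constant C = C(ρ, M) > 0 such that for all y, y' ∈ ℝ^m with ‖y‖ ≤ ρ and ‖y'‖ ≤ ρ, ( (1/2) ∫_X ( sqrt( exp(−Φ(u; y)) / Z(y) ) − sqrt( exp(−Φ(u; y')) / Z(y') ) )² μ₀(du) )^{1/2} ≤ C ‖y − y'‖. -/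
/-!
For data in a ball of radius `ρ` the residual `‖G u - y‖` is at most `M + ρ`, so the likelihood
`exp (-Φ(u; y))` lies in `[exp (-(M + ρ)² / 2), 1]` and is `(M + ρ)`-Lipschitz in `y`; integrating,
the same holds for `Z(y)`. Hence the densities `exp (-Φ) / Z` are bounded below and Lipschitz in `y`,
uniformly in `u`, and so are their square roots. A uniform pointwise bound on the difference of the
square roots bounds the Hellinger distance, since `μ₀` is a probability measure.
-/

open MeasureTheory

/-- The least-squares potential `Φ(u; y) = (1/2)‖G(u) − y‖²`. -/
noncomputable def lsPotential {X : Type*} {m : ℕ} (G : X → EuclideanSpace ℝ (Fin m))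
    (u : X) (y : EuclideanSpace ℝ (Fin m)) : ℝ :=
  (1 / 2 : ℝ) * ‖G u - y‖ ^ 2

/-- The normalization constant `Z(y) = ∫_X exp(−Φ(u; y)) μ₀(du)`. -/
noncomputable def normConst {X : Type*} [MeasurableSpace X] (μ₀ : Measure X) {m : ℕ}
    (G : X → EuclideanSpace ℝ (Fin m)) (y : EuclideanSpace ℝ (Fin m)) : ℝ :=
  ∫ u, Real.exp (-lsPotential G u y) ∂μ₀

theorem Real.abs_exp_neg_sub_exp_neg_le {a b : ℝ} (ha : 0 ≤ a) (hb : 0 ≤ b) :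
    |exp (-a) - exp (-b)| ≤ |a - b| := by
  wlog hab : a ≤ b generalizing a b
  · rw [abs_sub_comm, abs_sub_comm a b]
    exact this hb ha (le_of_not_ge hab)
  have hexp : exp (-b) = exp (-a) * exp (-(b - a)) := by rw [← exp_add]; ring_nf
  rw [abs_of_nonneg (sub_nonneg.2 (exp_le_exp.2 (neg_le_neg hab))),
    abs_of_nonpos (sub_nonpos.2 hab), hexp]
  nlinarith [add_one_le_exp (-(b - a)), exp_pos (-a), exp_le_one_iff.2 (neg_nonpos.2 ha)]

theorem Real.abs_sqrt_sub_sqrt_le {c s t : ℝ} (hc : 0 < c) (hs : c ≤ s) (ht : c ≤ t) :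
    |√s - √t| ≤ |s - t| / (2 * √c) := by
  have hcs : √c ≤ √s := sqrt_le_sqrt hs
  have hct : √c ≤ √t := sqrt_le_sqrt ht
  have hdiff : s - t = (√s - √t) * (√s + √t) := by
    linear_combination -sq_sqrt (hc.le.trans hs) + sq_sqrt (hc.le.trans ht)
  rw [le_div_iff₀ (by positivity), hdiff, abs_mul, abs_of_nonneg (by positivity : 0 ≤ √s + √t)]
  gcongr
  linarith

theorem abs_div_sub_div_le {a a' Z Z' c δ : ℝ} (hc : 0 < c) (ha' : 0 ≤ a') (ha'1 : a' ≤ 1)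
    (hZ : c ≤ Z) (hZ' : c ≤ Z') (hZ'1 : Z' ≤ 1) (haa' : |a - a'| ≤ δ) (hZZ' : |Z - Z'| ≤ δ) :
    |a / Z - a' / Z'| ≤ 2 * δ / c ^ 2 := by
  have hZpos : 0 < Z := hc.trans_le hZ
  have hZ'pos : 0 < Z' := hc.trans_le hZ'
  have hnum : |(a - a') * Z' + a' * (Z' - Z)| ≤ 2 * δ :=
    calc |(a - a') * Z' + a' * (Z' - Z)| ≤ |a - a'| * Z' + a' * |Z - Z'| := by
          grw [abs_add_le, abs_mul, abs_mul, abs_sub_comm Z', abs_of_pos hZ'pos, abs_of_nonneg ha']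
      _ ≤ δ * 1 + 1 * δ := by gcongr; exact (abs_nonneg _).trans haa'
      _ = 2 * δ := by ring
  have hsplit : a / Z - a' / Z' = ((a - a') * Z' + a' * (Z' - Z)) / (Z * Z') := by
    field_simp; ring
  rw [hsplit, abs_div, abs_of_pos (mul_pos hZpos hZ'pos), sq]
  gcongr
  exact (abs_nonneg _).trans hnum

theorem abs_half_mul_sq_sub_half_mul_sq_le {a b R d : ℝ} (ha : 0 ≤ a) (hb : 0 ≤ b)
    (haR : a ≤ R) (hbR : b ≤ R) (hab : |a - b| ≤ d) :
    |1 / 2 * a ^ 2 - 1 / 2 * b ^ 2| ≤ R * d := by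
  have hfactor : 1 / 2 * a ^ 2 - 1 / 2 * b ^ 2 = (a - b) * ((a + b) / 2) := by ring
  rw [hfactor, abs_mul, abs_of_nonneg (by positivity : 0 ≤ (a + b) / 2), mul_comm]
  exact mul_le_mul (by linarith) hab (abs_nonneg _) (by linarith)

theorem sqrt_half_integral_sq_le {α : Type*} [MeasurableSpace α] {μ : Measure α}
    [IsProbabilityMeasure μ] {f : α → ℝ} {K : ℝ} (hf : ∀ x, |f x| ≤ K) :
    √(1 / 2 * ∫ x, f x ^ 2 ∂μ) ≤ K := by
  obtain ⟨x₀⟩ := nonempty_of_isProbabilityMeasure μ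
  have hK : 0 ≤ K := (abs_nonneg _).trans (hf x₀)
  have hsq : ∀ x, ‖f x ^ 2‖ ≤ K ^ 2 := fun x => by
    rw [Real.norm_eq_abs, abs_pow]; gcongr; exact hf x
  have hint : ∫ x, f x ^ 2 ∂μ ≤ K ^ 2 := by
    simpa using (le_abs_self _).trans (norm_integral_le_of_norm_le_const (μ := μ)
      (Filter.Eventually.of_forall hsq))
  calc √(1 / 2 * ∫ x, f x ^ 2 ∂μ) ≤ √(K ^ 2) := by
        gcongr; nlinarith [integral_nonneg (μ := μ) (f := fun x => f x ^ 2) fun x => sq_nonneg (f x)]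
    _ = K := Real.sqrt_sq hK

section Likelihood

variable {X : Type*} {m : ℕ} {G : X → EuclideanSpace ℝ (Fin m)} {M ρ : ℝ}
  {y y' : EuclideanSpace ℝ (Fin m)}

theorem lsPotential_nonneg (u : X) (y : EuclideanSpace ℝ (Fin m)) : 0 ≤ lsPotential G u y := by
  unfold lsPotential; positivity

theorem norm_sub_le_add_of_norm_le (hGbdd : ∀ u, ‖G u‖ ≤ M) (u : X) (hy : ‖y‖ ≤ ρ) :
    ‖G u - y‖ ≤ M + ρ :=
  (norm_sub_le _ _).trans (add_le_add (hGbdd u) hy)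

theorem exp_neg_lsPotential_le_one (u : X) (y : EuclideanSpace ℝ (Fin m)) :
    Real.exp (-lsPotential G u y) ≤ 1 :=
  Real.exp_le_one_iff.2 (neg_nonpos.2 (lsPotential_nonneg u y))

theorem exp_le_exp_neg_lsPotential (hGbdd : ∀ u, ‖G u‖ ≤ M) (u : X) (hy : ‖y‖ ≤ ρ) :
    Real.exp (-((M + ρ) ^ 2 / 2)) ≤ Real.exp (-lsPotential G u y) := by
  have hres := norm_sub_le_add_of_norm_le hGbdd u hy
  have hres0 := norm_nonneg (G u - y)
  gcongr
  unfold lsPotential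
  nlinarith

theorem abs_exp_neg_lsPotential_sub_le (hGbdd : ∀ u, ‖G u‖ ≤ M) (u : X)
    (hy : ‖y‖ ≤ ρ) (hy' : ‖y'‖ ≤ ρ) :
    |Real.exp (-lsPotential G u y) - Real.exp (-lsPotential G u y')| ≤ (M + ρ) * ‖y - y'‖ := by
  refine (Real.abs_exp_neg_sub_exp_neg_le (lsPotential_nonneg u y)
    (lsPotential_nonneg u y')).trans ?_
  refine abs_half_mul_sq_sub_half_mul_sq_le (norm_nonneg _) (norm_nonneg _)
    (norm_sub_le_add_of_norm_le hGbdd u hy) (norm_sub_le_add_of_norm_le hGbdd u hy') ?_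
  simpa [norm_sub_rev y'] using abs_norm_sub_norm_le (G u - y) (G u - y')

variable [MeasurableSpace X] {μ₀ : Measure X} [IsProbabilityMeasure μ₀]

theorem integrable_exp_neg_lsPotential (hGmeas : Measurable G) (y : EuclideanSpace ℝ (Fin m)) :
    Integrable (fun u => Real.exp (-lsPotential G u y)) μ₀ := by
  have hcont : Continuous fun v : EuclideanSpace ℝ (Fin m) =>
      Real.exp (-((1 / 2 : ℝ) * ‖v - y‖ ^ 2)) := by fun_prop
  refine Integrable.mono' (integrable_const 1)
    (hcont.measurable.comp hGmeas).aestronglyMeasurable (Filter.Eventually.of_forall fun u => ?_)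
  rw [Real.norm_of_nonneg (Real.exp_pos _).le]
  exact exp_neg_lsPotential_le_one u y

theorem normConst_le_one (hGmeas : Measurable G) (y : EuclideanSpace ℝ (Fin m)) :
    normConst μ₀ G y ≤ 1 := by
  simpa [normConst] using integral_mono (integrable_exp_neg_lsPotential (μ₀ := μ₀) hGmeas y)
    (integrable_const (1 : ℝ)) (exp_neg_lsPotential_le_one · y)

theorem exp_le_normConst (hGmeas : Measurable G) (hGbdd : ∀ u, ‖G u‖ ≤ M) (hy : ‖y‖ ≤ ρ) :
    Real.exp (-((M + ρ) ^ 2 / 2)) ≤ normConst μ₀ G y := by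
  simpa [normConst] using integral_mono (integrable_const _)
    (integrable_exp_neg_lsPotential (μ₀ := μ₀) hGmeas y) (exp_le_exp_neg_lsPotential hGbdd · hy)

theorem abs_normConst_sub_le (hGmeas : Measurable G) (hGbdd : ∀ u, ‖G u‖ ≤ M)
    (hy : ‖y‖ ≤ ρ) (hy' : ‖y'‖ ≤ ρ) :
    |normConst μ₀ G y - normConst μ₀ G y'| ≤ (M + ρ) * ‖y - y'‖ := by
  rw [normConst, normConst, ← integral_sub (integrable_exp_neg_lsPotential hGmeas y)
    (integrable_exp_neg_lsPotential hGmeas y')]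
  simpa using norm_integral_le_of_norm_le_const (μ := μ₀)
    (f := fun u => Real.exp (-lsPotential G u y) - Real.exp (-lsPotential G u y'))
    (ae_of_all _ (abs_exp_neg_lsPotential_sub_le hGbdd · hy hy'))

theorem abs_sqrt_density_sub_le (hGmeas : Measurable G) (hGbdd : ∀ u, ‖G u‖ ≤ M) (u : X)
    (hy : ‖y‖ ≤ ρ) (hy' : ‖y'‖ ≤ ρ) :
    |√(Real.exp (-lsPotential G u y) / normConst μ₀ G y) -
        √(Real.exp (-lsPotential G u y') / normConst μ₀ G y')|
      ≤ (M + ρ) * Real.exp (5 * (M + ρ) ^ 2 / 4) * ‖y - y'‖ := by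
  set c := Real.exp (-((M + ρ) ^ 2 / 2))
  have hc : 0 < c := Real.exp_pos _
  have hZ := exp_le_normConst (μ₀ := μ₀) hGmeas hGbdd hy
  have hZ' := exp_le_normConst (μ₀ := μ₀) hGmeas hGbdd hy'
  have hdensity : ∀ {y}, ‖y‖ ≤ ρ →
      c ≤ Real.exp (-lsPotential G u y) / normConst μ₀ G y := fun hy =>
    (exp_le_exp_neg_lsPotential hGbdd u hy).trans (le_div_self (Real.exp_pos _).le
      (hc.trans_le (exp_le_normConst hGmeas hGbdd hy)) (normConst_le_one hGmeas _))
  have hconst : c ^ 2 * √c = Real.exp (-(5 * (M + ρ) ^ 2 / 4)) := by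
    rw [← Real.exp_half, ← Real.exp_nat_mul, ← Real.exp_add]; ring_nf
  calc _ ≤ _ / (2 * √c) := Real.abs_sqrt_sub_sqrt_le hc (hdensity hy) (hdensity hy')
    _ ≤ 2 * ((M + ρ) * ‖y - y'‖) / c ^ 2 / (2 * √c) := by
        gcongr
        exact abs_div_sub_div_le hc (Real.exp_pos _).le (exp_neg_lsPotential_le_one u y') hZ hZ'
          (normConst_le_one hGmeas y') (abs_exp_neg_lsPotential_sub_le hGbdd u hy hy')
          (abs_normConst_sub_le hGmeas hGbdd hy hy')
    _ = (M + ρ) * ‖y - y'‖ / (c ^ 2 * √c) := by field_simp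
    _ = _ := by rw [hconst, div_eq_mul_inv, ← Real.exp_neg, neg_neg]; ring

end Likelihood

theorem stmt12 {X : Type*} [MeasurableSpace X] (μ₀ : Measure X) [IsProbabilityMeasure μ₀]
    (m : ℕ) (G : X → EuclideanSpace ℝ (Fin m)) (hGmeas : Measurable G)
    (M : ℝ) (hM : 0 ≤ M) (hGbdd : ∀ u, ‖G u‖ ≤ M) :
    (∀ y : EuclideanSpace ℝ (Fin m), 0 < normConst μ₀ G y) ∧
      ∀ ρ > (0 : ℝ), ∃ C > (0 : ℝ), ∀ y y' : EuclideanSpace ℝ (Fin m),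
        ‖y‖ ≤ ρ → ‖y'‖ ≤ ρ →
        Real.sqrt ((1 / 2 : ℝ) * ∫ u,
            (Real.sqrt (Real.exp (-lsPotential G u y) / normConst μ₀ G y) -
              Real.sqrt (Real.exp (-lsPotential G u y') / normConst μ₀ G y')) ^ 2 ∂μ₀)
          ≤ C * ‖y - y'‖ := by
  refine ⟨fun y => (Real.exp_pos _).trans_le (exp_le_normConst hGmeas hGbdd le_rfl),
    fun ρ hρ => ⟨(M + ρ) * Real.exp (5 * (M + ρ) ^ 2 / 4), mul_pos (by linarith) (Real.exp_pos _),
      fun y y' hy hy' => ?_⟩⟩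
  exact sqrt_half_integral_sq_le fun u => abs_sqrt_density_sub_le hGmeas hGbdd u hy hy'
end
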